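/- arXiv:2411.12439 — 2 statements merged into one kernel-verified Lean document; each statement's English description precedes it below -/
import Mathlib

section
/- Let T[1..n] be a string over a linearly ordered alphabet. For every position ℓ < n that does not lie in the maximal equal-symbol run suffix of T: ℓ is S-type if and only if the suffix T[ℓ..n] is lexicographically smaller than the suffix T[ℓ+1..n], and ℓ is L-type if and only if T[ℓ..n] is lexicographically larger than T[ℓ+1..n]. Moreover, for every position ℓ < n lying in the maximal equal-symbol run suffix, T[ℓ..n] is lexicographically larger than T[ℓ+1..n] (a proper prefix is smaller). -/
/-- Position `ℓ` of the string `T[1..n]` is L-type (Nong et al.'s classification):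
`T[ℓ] > T[ℓ+1]`, or `T[ℓ] = T[ℓ+1]` and `ℓ+1` is L-type. -/
def isLType {α : Type*} [LinearOrder α] (T : ℕ → α) (n ℓ : ℕ) : Prop :=
  if _h : ℓ < n then
    T (ℓ + 1) < T ℓ ∨ (T ℓ = T (ℓ + 1) ∧ isLType T n (ℓ + 1))
  else False
termination_by n - ℓ
decreasing_by omega

/-- Position `ℓ` of the string `T[1..n]` is S-type:
`T[ℓ] < T[ℓ+1]`, or `T[ℓ] = T[ℓ+1]` and `ℓ+1` is S-type. -/
def isSType {α : Type*} [LinearOrder α] (T : ℕ → α) (n ℓ : ℕ) : Prop :=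
  if _h : ℓ < n then
    T ℓ < T (ℓ + 1) ∨ (T ℓ = T (ℓ + 1) ∧ isSType T n (ℓ + 1))
  else False
termination_by n - ℓ
decreasing_by omega

/-- Position `ℓ` lies in the maximal equal-symbol run suffix of `T[1..n]`. -/
def inRunSuffix {α : Type*} (T : ℕ → α) (n ℓ : ℕ) : Prop :=
  ∀ i, ℓ ≤ i → i < n → T i = T (i + 1)

/-- Position `ℓ` of `T[1..n]` is LMS-type: `ℓ ≥ 2`, `ℓ` is S-type and `ℓ-1` is L-type. -/
def isLMS {α : Type*} [LinearOrder α] (T : ℕ → α) (n ℓ : ℕ) : Prop :=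
  2 ≤ ℓ ∧ isSType T n ℓ ∧ isLType T n (ℓ - 1)

/-- The suffix `T[ℓ..n]` of the string `T[1..n]`, as a list. -/
def suffixList {α : Type*} (T : ℕ → α) (n ℓ : ℕ) : List α :=
  (List.range (n + 1 - ℓ)).map (fun i => T (ℓ + i))

/-! For `ℓ < n` the suffixes start with `T ℓ, T (ℓ+1), …` and `T (ℓ+1), …`, so comparing
`T[ℓ..n]` with `T[ℓ+1..n]` lexicographically unfolds exactly like the recursive definitions of
S- and L-type. The recursion ends at `ℓ = n`, where `T[n+1..n]` is empty and hence smaller: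
that is why positions of the run suffix compare like L-type positions. -/

section Suffixes

variable {α : Type*} (T : ℕ → α) {n ℓ : ℕ}

lemma suffixList_eq_cons (h : ℓ ≤ n) :
    suffixList T n ℓ = T ℓ :: suffixList T n (ℓ + 1) := by
  obtain ⟨k, rfl⟩ := Nat.exists_eq_add_of_le h
  simp only [suffixList, show ℓ + k + 1 - ℓ = k + 1 by omega,
    show ℓ + k + 1 - (ℓ + 1) = k by omega, List.range_succ_eq_map, List.map_cons, List.map_map]
  refine congrArg₂ _ rfl (List.map_congr_left fun i _ => ?_)
  simp only [Function.comp_apply, Nat.succ_eq_add_one]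
  congr 1
  omega

lemma suffixList_succ_self : suffixList T n (n + 1) = [] := by
  simp [suffixList]

lemma inRunSuffix_self : inRunSuffix T n n :=
  fun _ hi hin => absurd hi (Nat.not_le.2 hin)

lemma inRunSuffix_iff_of_lt (h : ℓ < n) :
    inRunSuffix T n ℓ ↔ T ℓ = T (ℓ + 1) ∧ inRunSuffix T n (ℓ + 1) := by
  refine ⟨fun hr => ⟨hr ℓ le_rfl h, fun i hi => hr i (by omega)⟩, fun ⟨heq, hr⟩ i hi => ?_⟩
  rcases hi.eq_or_lt with rfl | hi
  · exact fun _ => heq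
  · exact hr i hi

end Suffixes

section Types

variable {α : Type*} [LinearOrder α] (T : ℕ → α) {n : ℕ}

lemma isSType_iff_of_lt {ℓ : ℕ} (h : ℓ < n) :
    isSType T n ℓ ↔ T ℓ < T (ℓ + 1) ∨ (T ℓ = T (ℓ + 1) ∧ isSType T n (ℓ + 1)) := by
  rw [isSType, dif_pos h]

lemma isLType_iff_of_lt {ℓ : ℕ} (h : ℓ < n) :
    isLType T n ℓ ↔ T (ℓ + 1) < T ℓ ∨ (T ℓ = T (ℓ + 1) ∧ isLType T n (ℓ + 1)) := by
  rw [isLType, dif_pos h]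

lemma not_isSType_self : ¬ isSType T n n := by
  rw [isSType, dif_neg (lt_irrefl n)]
  exact id

theorem isSType_iff_lex_suffixList {ℓ : ℕ} (h : ℓ ≤ n) :
    isSType T n ℓ ↔ List.Lex (· < ·) (suffixList T n ℓ) (suffixList T n (ℓ + 1)) := by
  rcases h.eq_or_lt with rfl | h
  · rw [suffixList_eq_cons T le_rfl, suffixList_succ_self]
    exact iff_of_false (not_isSType_self T) List.not_lex_nil
  · rw [isSType_iff_of_lt T h, isSType_iff_lex_suffixList (ℓ := ℓ + 1) h,
      suffixList_eq_cons T h.le, suffixList_eq_cons T (ℓ := ℓ + 1) h, List.cons_lex_cons_iff]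
termination_by n - ℓ

theorem lex_suffixList_succ_iff {ℓ : ℕ} (h : ℓ ≤ n) :
    List.Lex (· < ·) (suffixList T n (ℓ + 1)) (suffixList T n ℓ) ↔
      isLType T n ℓ ∨ inRunSuffix T n ℓ := by
  rcases h.eq_or_lt with rfl | h
  · rw [suffixList_eq_cons T le_rfl, suffixList_succ_self]
    exact iff_of_true List.Lex.nil (Or.inr (inRunSuffix_self T))
  · rw [isLType_iff_of_lt T h, inRunSuffix_iff_of_lt T h, suffixList_eq_cons T h.le,
      suffixList_eq_cons T (ℓ := ℓ + 1) h, List.cons_lex_cons_iff,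
      ← suffixList_eq_cons T (ℓ := ℓ + 1) h, lex_suffixList_succ_iff (ℓ := ℓ + 1) h,
      eq_comm (a := T (ℓ + 1))]
    tauto
termination_by n - ℓ

end Types

theorem stmt1_general {α : Type*} [LinearOrder α] (T : ℕ → α) (n ℓ : ℕ)
    (h2 : ℓ < n) :
    (¬ inRunSuffix T n ℓ →
      (isSType T n ℓ ↔ List.Lex (· < ·) (suffixList T n ℓ) (suffixList T n (ℓ + 1))) ∧
      (isLType T n ℓ ↔ List.Lex (· < ·) (suffixList T n (ℓ + 1)) (suffixList T n ℓ))) ∧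
    (inRunSuffix T n ℓ →
      List.Lex (· < ·) (suffixList T n (ℓ + 1)) (suffixList T n ℓ)) := by
  refine ⟨fun hnr => ⟨isSType_iff_lex_suffixList T h2.le, ?_⟩,
    fun hr => (lex_suffixList_succ_iff T h2.le).2 (Or.inr hr)⟩
  rw [lex_suffixList_succ_iff T h2.le, or_iff_left hnr]

/-- for `ℓ < n` outside the maximal equal-symbol run suffix, `ℓ` is S-type
iff the suffix `T[ℓ..n]` is lexicographically smaller than `T[ℓ+1..n]`, and L-type iff
it is larger; positions `ℓ < n` in the run suffix satisfy `T[ℓ..n] > T[ℓ+1..n]`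
(a proper prefix is smaller). -/
theorem stmt1 {α : Type*} [LinearOrder α] (T : ℕ → α) (n ℓ : ℕ)
    (h1 : 1 ≤ ℓ) (h2 : ℓ < n) :
    (¬ inRunSuffix T n ℓ →
      (isSType T n ℓ ↔ List.Lex (· < ·) (suffixList T n ℓ) (suffixList T n (ℓ + 1))) ∧
      (isLType T n ℓ ↔ List.Lex (· < ·) (suffixList T n (ℓ + 1)) (suffixList T n ℓ))) ∧
    (inRunSuffix T n ℓ →
      List.Lex (· < ·) (suffixList T n (ℓ + 1)) (suffixList T n ℓ)) :=
  stmt1_general T n ℓ h2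
end

section
/- The LMS parsing is locally consistent: let T and T' be strings over the same linearly ordered alphabet with T[a..b] = T'[a'..b'] (equal substrings of equal length). Then for every offset t with 1 ≤ t ≤ b−a such that there exists an index j with a+t ≤ j < b and T[j] ≠ T[j+1], position a+t is LMS-type in T if and only if position a'+t is LMS-type in T'. In particular, the break positions strictly inside the two occurrences coincide (after shifting), except possibly at the first position of the occurrence and at positions covered by the maximal equal-symbol run ending the occurrence. -/
theorem types_iff {α : Type*} [LinearOrder α] (T : ℕ → α) (n k : ℕ)
    (hkn : k < n) (hne : T k ≠ T (k+1)) :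
    ∀ d ℓ, k - ℓ = d → ℓ ≤ k → (∀ i, ℓ ≤ i → i < k → T i = T (i+1)) →
    (isSType T n ℓ ↔ T k < T (k+1)) ∧ (isLType T n ℓ ↔ T (k+1) < T k) := by
  intro d
  induction d with
  | zero =>
    intro ℓ hd hle _
    have hlk : ℓ = k := by omega
    subst hlk
    rw [isSType, isLType]
    simp only [dif_pos hkn]
    constructor
    · constructor
      · rintro (h | ⟨h, _⟩)
        · exact h
        · exact absurd h hne
      · exact fun h => Or.inl h
    · constructor
      · rintro (h | ⟨h, _⟩)
        · exact h
        · exact absurd h hne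
      · exact fun h => Or.inl h
  | succ d ih =>
    intro ℓ hd hle hrun
    have hlk : ℓ < k := by omega
    have heq : T ℓ = T (ℓ+1) := hrun ℓ le_rfl hlk
    have hln : ℓ < n := by omega
    have ihs := ih (ℓ+1) (by omega) (by omega)
      (fun i h1 h2 => hrun i (by omega) h2)
    rw [isSType, isLType]
    simp only [dif_pos hln]
    constructor
    · constructor
      · rintro (h | ⟨_, h⟩)
        · exact absurd h (by simp [heq])
        · exact ihs.1.mp h
      · exact fun h => Or.inr ⟨heq, ihs.1.mpr h⟩
    · constructor
      · rintro (h | ⟨_, h⟩)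
        · exact absurd h (by simp [heq])
        · exact ihs.2.mp h
      · exact fun h => Or.inr ⟨heq, ihs.2.mpr h⟩

/-- the LMS parsing is locally consistent. If `T[a..b] = T'[a'..b']`, then
for every offset `1 ≤ t ≤ b-a` such that some index `j` with `a+t ≤ j < b` satisfies
`T[j] ≠ T[j+1]`, position `a+t` is LMS-type in `T` iff position `a'+t` is LMS-type
in `T'`. -/
theorem stmt5 {α : Type*} [LinearOrder α] (T T' : ℕ → α) (n n' a b a' b' : ℕ)
    (ha : 1 ≤ a) (hab : a ≤ b) (hbn : b ≤ n)
    (ha' : 1 ≤ a') (hbn' : b' ≤ n')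
    (hlen : b - a = b' - a')
    (heq : ∀ u, u ≤ b - a → T (a + u) = T' (a' + u)) :
    ∀ t, 1 ≤ t → t ≤ b - a →
      (∃ j, a + t ≤ j ∧ j < b ∧ T j ≠ T (j + 1)) →
      (isLMS T n (a + t) ↔ isLMS T' n' (a' + t)) := by
  classical
  intro t ht htb hex
  obtain ⟨j, hj1, hj2, hj3⟩ := hex
  have hexP : ∃ m, a + t ≤ m ∧ T m ≠ T (m+1) ∧ m < b := ⟨j, hj1, hj3, hj2⟩
  set k := Nat.find hexP with hkdef
  obtain ⟨hk1, hk2, hk3⟩ := Nat.find_spec hexP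
  have hmin : ∀ i, a + t ≤ i → i < k → T i = T (i+1) := by
    intro i h1 h2
    by_contra hne
    exact absurd (Nat.find_le (p := fun m => a + t ≤ m ∧ T m ≠ T (m+1) ∧ m < b) ⟨h1, hne, by omega⟩) (by omega)
  -- translate k to the T' window
  have hkb : k - a < b - a := by omega
  have hTk : T k = T' (a' + (k - a)) := by
    have := heq (k - a) (by omega); rwa [show a + (k - a) = k by omega] at this
  have hTk1 : T (k+1) = T' (a' + (k - a) + 1) := by
    have := heq (k - a + 1) (by omega)
    rwa [show a + (k - a + 1) = k + 1 by omega, show a' + (k - a + 1) = a' + (k - a) + 1 by omega] at this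
  set k' := a' + (k - a) with hk'def
  have hk'b : k' < b' := by omega
  have hk'ne : T' k' ≠ T' (k' + 1) := by rw [← hTk, ← hTk1]; exact hk2
  have hmin' : ∀ i, a' + t ≤ i → i < k' → T' i = T' (i+1) := by
    intro i h1 h2
    have h3 : i - a' < k - a := by omega
    have e1 := heq (i - a') (by omega)
    have e2 := heq (i - a' + 1) (by omega)
    rw [show a' + (i - a') = i by omega] at e1
    rw [show a' + (i - a' + 1) = i + 1 by omega] at e2
    rw [← e1, ← e2]
    exact hmin (a + (i - a')) (by omega) (by omega)
  have hkn : k < n := by omega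
  have hk'n : k' < n' := by omega
  -- S-type parts
  have hS := (types_iff T n k hkn hk2 (k - (a+t)) (a+t) rfl (by omega) hmin).1
  have hS' := (types_iff T' n' k' hk'n hk'ne (k' - (a'+t)) (a'+t) rfl (by omega) hmin').1
  -- L-type parts
  have hLiff : (isLType T n (a + t - 1) ↔ isLType T' n' (a' + t - 1)) := by
    by_cases hc : T (a + t - 1) = T (a + t)
    · -- run extends back one position; change point is still k
      have hrunL : ∀ i, a + t - 1 ≤ i → i < k → T i = T (i+1) := by
        intro i h1 h2
        rcases Nat.lt_or_ge i (a + t) with h | h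
        · have : i = a + t - 1 := by omega
          rw [this, show a + t - 1 + 1 = a + t by omega]; exact hc
        · exact hmin i h h2
      have hc' : T' (a' + t - 1) = T' (a' + t) := by
        have e1 := heq (t - 1) (by omega)
        have e2 := heq t htb
        rw [show a + (t - 1) = a + t - 1 by omega, show a' + (t - 1) = a' + t - 1 by omega] at e1
        rw [← e1, ← e2]; exact hc
      have hrunL' : ∀ i, a' + t - 1 ≤ i → i < k' → T' i = T' (i+1) := by
        intro i h1 h2
        rcases Nat.lt_or_ge i (a' + t) with h | h
        · have : i = a' + t - 1 := by omega
          rw [this, show a' + t - 1 + 1 = a' + t by omega]; exact hc'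
        · exact hmin' i h h2
      have hL := (types_iff T n k hkn hk2 (k - (a+t-1)) (a+t-1) rfl (by omega) hrunL).2
      have hL' := (types_iff T' n' k' hk'n hk'ne (k' - (a'+t-1)) (a'+t-1) rfl (by omega) hrunL').2
      rw [hL, hL', hTk, hTk1]
    · -- change point is a+t-1 itself
      have h1n : a + t - 1 < n := by omega
      have h1n' : a' + t - 1 < n' := by omega
      have e1 := heq (t - 1) (by omega)
      have e2 := heq t htb
      rw [show a + (t - 1) = a + t - 1 by omega, show a' + (t - 1) = a' + t - 1 by omega] at e1
      have hstep : a + t - 1 + 1 = a + t := by omega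
      have hstep' : a' + t - 1 + 1 = a' + t := by omega
      have hcne : T (a + t - 1) ≠ T (a + t - 1 + 1) := by rw [hstep]; exact hc
      have hcne' : T' (a' + t - 1) ≠ T' (a' + t - 1 + 1) := by
        rw [hstep', ← e1, ← e2, ← hstep]; exact hcne
      have hL := (types_iff T n (a+t-1) h1n hcne 0 (a+t-1) (by omega) le_rfl
        (fun i hi1 hi2 => absurd hi1 (by omega))).2
      have hL' := (types_iff T' n' (a'+t-1) h1n' hcne' 0 (a'+t-1) (by omega) le_rfl
        (fun i hi1 hi2 => absurd hi1 (by omega))).2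
      rw [hL, hL', hstep, hstep', e1, e2]
  constructor
  · rintro ⟨h2, hs, hl⟩
    exact ⟨by omega, hS'.mpr (by rw [← hTk, ← hTk1]; exact hS.mp hs),
      by rw [show a' + t - 1 = a' + t - 1 from rfl]; exact hLiff.mp (by rwa [show a + t - 1 = a + t - 1 from rfl])⟩
  · rintro ⟨h2, hs, hl⟩
    exact ⟨by omega, hS.mpr (by rw [hTk, hTk1]; exact hS'.mp hs), hLiff.mpr hl⟩
end
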